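/- For n, m ≥ 2, the toll number of the Cartesian product K_n □ K_m equals 2. -/

import Mathlib

open SimpleGraph

/-- A walk `W` between `u` and `v` is a *tolled walk* if either `u = v` and `W` is trivial,
or `u` and `v` are adjacent and `W` is the single-edge walk, or `u ≠ v` are non-adjacent,
`W` has at least one interior vertex, `u` is adjacent exactly to the interior vertex
at position 1 and `v` exactly to the interior vertex at position `W.length - 1`. -/
def IsTolledWalk {V : Type*} (G : SimpleGraph V) {u v : V} (W : G.Walk u v) : Prop :=
  (u = v ∧ W.length = 0) ∨
  (G.Adj u v ∧ W.support = [u, v]) ∨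
  (¬ G.Adj u v ∧ u ≠ v ∧ 2 ≤ W.length ∧
    (∀ i, 0 < i → i < W.length → (G.Adj u (W.support.getD i u) ↔ i = 1)) ∧
    (∀ i, 0 < i → i < W.length → (G.Adj v (W.support.getD i u) ↔ i = W.length - 1)))

/-- The toll interval between `u` and `v`: vertices lying on some tolled walk. -/
def tollInterval {V : Type*} (G : SimpleGraph V) (u v : V) : Set V :=
  {x | ∃ W : G.Walk u v, IsTolledWalk G W ∧ x ∈ W.support}

/-- A toll set: the toll intervals between its pairs cover the vertex set. -/
def IsTollSet {V : Type*} (G : SimpleGraph V) (S : Set V) : Prop :=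
  ∀ x : V, ∃ u ∈ S, ∃ v ∈ S, x ∈ tollInterval G u v

/-- The toll number: minimum size of a toll set. -/
noncomputable def tollNumber {V : Type*} (G : SimpleGraph V) : ℕ :=
  sInf {n | ∃ S : Set V, S.Finite ∧ S.ncard = n ∧ IsTollSet G S}

/-- `v` is a cut vertex if deleting it disconnects the graph. -/
def IsCutVertex {V : Type*} (G : SimpleGraph V) (v : V) : Prop :=
  ¬ (G.induce {w | w ≠ v}).Preconnected

/-- The extreme vertices of `G` with respect to toll convexity. -/
def extremeVertices {V : Type*} (G : SimpleGraph V) : Set V :=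
  {s | ∀ x y : V, x ≠ s → y ≠ s → s ∉ tollInterval G x y}

/-- The lexicographic product of simple graphs. -/
def lexProd {V W : Type*} (G : SimpleGraph V) (H : SimpleGraph W) : SimpleGraph (V × W) where
  Adj a b := G.Adj a.1 b.1 ∨ (a.1 = b.1 ∧ H.Adj a.2 b.2)
  symm := by
    refine ⟨?_⟩
    rintro a b (h | ⟨h1, h2⟩)
    · exact Or.inl h.symm
    · exact Or.inr ⟨h1.symm, h2.symm⟩
  loopless := by
    refine ⟨?_⟩
    rintro a (h | ⟨_, h⟩)
    · exact G.ne_of_adj h rfl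
    · exact H.ne_of_adj h rfl

/-! In the rook's graph, take `u = (a₀, b₀)` and `v = (a₁, b₁)` in different rows and columns.
Every vertex lies on a tolled walk from `u` to `v` of length at most four: `u, (a₀, b₁), v` or
`u, (a₁, b₀), v` for the corners; `u, (a₀, b), (a₁, b), v` for the rest of rows `a₀` and `a₁`
(symmetrically for columns `b₀` and `b₁`); and `u, (a₀, b), (a, b), (a, b₁), v` for every other
`(a, b)`. Conversely one vertex never suffices, since the only tolled walk from a vertex to itself
is trivial. -/

section TolledWalks

variable {V : Type*} {G : SimpleGraph V} {u v w x y : V}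

theorem tollInterval_self (u : V) : tollInterval G u u = {u} := by
  ext x
  constructor
  · rintro ⟨W, hW | hW | hW, hx⟩
    · rw [Walk.length_eq_zero_iff, ← Walk.eq_nil_iff_nil] at hW
      simpa [hW.2] using hx
    · exact absurd hW.1 (G.loopless.irrefl u)
    · exact absurd rfl hW.2.1
  · rintro rfl
    exact ⟨Walk.nil, Or.inl ⟨rfl, rfl⟩, Walk.start_mem_support _⟩

theorem isTolledWalk_cons_cons_nil (huw : G.Adj u w) (hwv : G.Adj w v)
    (huv : ¬ G.Adj u v) (hne : u ≠ v) :
    IsTolledWalk G (Walk.cons huw (Walk.cons hwv Walk.nil)) := by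
  refine Or.inr (Or.inr ⟨huv, hne, by simp, ?_, ?_⟩) <;>
  · intro i hi₀ hi
    simp only [Walk.length_cons, Walk.length_nil] at hi
    interval_cases i
    simp [huw, hwv.symm]

theorem isTolledWalk_cons_cons_cons_nil (hux : G.Adj u x) (hxy : G.Adj x y) (hyv : G.Adj y v)
    (huy : ¬ G.Adj u y) (hvx : ¬ G.Adj v x) (huv : ¬ G.Adj u v) (hne : u ≠ v) :
    IsTolledWalk G (Walk.cons hux (Walk.cons hxy (Walk.cons hyv Walk.nil))) := by
  refine Or.inr (Or.inr ⟨huv, hne, by simp, ?_, ?_⟩) <;>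
  · intro i hi₀ hi
    simp only [Walk.length_cons, Walk.length_nil] at hi
    interval_cases i <;> simp [hux, huy, hyv.symm, hvx, List.getD]

theorem isTolledWalk_cons_cons_cons_cons_nil (hux : G.Adj u x) (hxw : G.Adj x w)
    (hwy : G.Adj w y) (hyv : G.Adj y v) (huw : ¬ G.Adj u w) (huy : ¬ G.Adj u y)
    (hvx : ¬ G.Adj v x) (hvw : ¬ G.Adj v w) (huv : ¬ G.Adj u v) (hne : u ≠ v) :
    IsTolledWalk G
      (Walk.cons hux (Walk.cons hxw (Walk.cons hwy (Walk.cons hyv Walk.nil)))) := by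
  refine Or.inr (Or.inr ⟨huv, hne, by simp, ?_, ?_⟩) <;>
  · intro i hi₀ hi
    simp only [Walk.length_cons, Walk.length_nil] at hi
    interval_cases i <;> simp [hux, huw, huy, hyv.symm, hvx, hvw, List.getD]

theorem IsTollSet.nontrivial [Nontrivial V] {S : Set V} (hS : IsTollSet G S) : S.Nontrivial := by
  by_contra hS₁
  have hsub : S.Subsingleton := Set.not_nontrivial_iff.mp hS₁
  have mem_S (x : V) : x ∈ S := by
    obtain ⟨u, hu, v, hv, hx⟩ := hS x
    rw [hsub hu hv, tollInterval_self, Set.mem_singleton_iff] at hx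
    exact hx ▸ hv
  obtain ⟨x, y, hxy⟩ := exists_pair_ne V
  exact hxy (hsub (mem_S x) (mem_S y))

theorem tollNumber_eq_two [Nontrivial V] (huv : u ≠ v) (hS : IsTollSet G {u, v}) :
    tollNumber G = 2 := by
  have h₂ : 2 ∈ {k | ∃ S : Set V, S.Finite ∧ S.ncard = k ∧ IsTollSet G S} :=
    ⟨{u, v}, Set.toFinite _, Set.ncard_pair huv, hS⟩
  refine le_antisymm (Nat.sInf_le h₂) (le_csInf ⟨2, h₂⟩ ?_)
  rintro k ⟨S, hfin, rfl, hS⟩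
  have := hfin.to_subtype
  exact Set.one_lt_ncard_iff_nontrivial.mpr hS.nontrivial

end TolledWalks

section RooksGraph

variable {α β : Type*} {a₀ a₁ : α} {b₀ b₁ : β}

@[simp]
theorem top_boxProd_top_adj {p q : α × β} :
    ((⊤ : SimpleGraph α) □ (⊤ : SimpleGraph β)).Adj p q ↔
      (p.1 ≠ q.1 ∧ p.2 = q.2) ∨ (p.2 ≠ q.2 ∧ p.1 = q.1) := by
  simp [boxProd_adj]

theorem mem_tollInterval_top_boxProd_top (ha : a₀ ≠ a₁) (hb : b₀ ≠ b₁) (x : α × β) :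
    x ∈ tollInterval ((⊤ : SimpleGraph α) □ (⊤ : SimpleGraph β)) (a₀, b₀) (a₁, b₁) := by
  obtain ⟨a, b⟩ := x
  have huv : ¬ ((⊤ : SimpleGraph α) □ (⊤ : SimpleGraph β)).Adj (a₀, b₀) (a₁, b₁) := by
    simp [ha, hb]
  have hne : ((a₀, b₀) : α × β) ≠ (a₁, b₁) := by simp [ha]
  by_cases hrow : a = a₀ ∨ a = a₁ <;> by_cases hcol : b = b₀ ∨ b = b₁
  · have via₀₁ := isTolledWalk_cons_cons_nil (w := (a₀, b₁)) (by simp [hb]) (by simp [ha]) huv hne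
    have via₁₀ := isTolledWalk_cons_cons_nil (w := (a₁, b₀)) (by simp [ha]) (by simp [hb]) huv hne
    rcases hrow with rfl | rfl <;> rcases hcol with rfl | rfl
    exacts [⟨_, via₀₁, by simp⟩, ⟨_, via₀₁, by simp⟩, ⟨_, via₁₀, by simp⟩, ⟨_, via₀₁, by simp⟩]
  · obtain ⟨hb₀, hb₁⟩ : b ≠ b₀ ∧ b ≠ b₁ := not_or.mp hcol
    refine ⟨_, isTolledWalk_cons_cons_cons_nil (x := (a₀, b)) (y := (a₁, b))
      (by simp [hb₀.symm]) (by simp [ha]) (by simp [hb₁]) (by simp [hb₀.symm, ha])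
      (by simp [hb₁.symm, ha.symm]) huv hne, ?_⟩
    rcases hrow with rfl | rfl <;> simp
  · obtain ⟨ha₀, ha₁⟩ : a ≠ a₀ ∧ a ≠ a₁ := not_or.mp hrow
    refine ⟨_, isTolledWalk_cons_cons_cons_nil (x := (a, b₀)) (y := (a, b₁))
      (by simp [ha₀.symm]) (by simp [hb]) (by simp [ha₁]) (by simp [ha₀.symm, hb])
      (by simp [ha₁.symm, hb.symm]) huv hne, ?_⟩
    rcases hcol with rfl | rfl <;> simp
  · obtain ⟨ha₀, ha₁⟩ : a ≠ a₀ ∧ a ≠ a₁ := not_or.mp hrow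
    obtain ⟨hb₀, hb₁⟩ : b ≠ b₀ ∧ b ≠ b₁ := not_or.mp hcol
    refine ⟨_, isTolledWalk_cons_cons_cons_cons_nil (x := (a₀, b)) (w := (a, b)) (y := (a, b₁))
      (by simp [hb₀.symm]) (by simp [ha₀.symm]) (by simp [hb₁]) (by simp [ha₁])
      (by simp [ha₀.symm, hb₀.symm]) (by simp [ha₀.symm, hb])
      (by simp [hb₁.symm, ha.symm]) (by simp [ha₁.symm, hb₁.symm]) huv hne, by simp⟩

theorem isTollSet_top_boxProd_top_pair (ha : a₀ ≠ a₁) (hb : b₀ ≠ b₁) :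
    IsTollSet ((⊤ : SimpleGraph α) □ (⊤ : SimpleGraph β)) {(a₀, b₀), (a₁, b₁)} := fun x =>
  ⟨_, Set.mem_insert _ _, _, Set.mem_insert_of_mem _ rfl, mem_tollInterval_top_boxProd_top ha hb x⟩

end RooksGraph

theorem stmt4 (n m : ℕ) (hn : 2 ≤ n) (hm : 2 ≤ m) :
    tollNumber ((⊤ : SimpleGraph (Fin n)) □ (⊤ : SimpleGraph (Fin m))) = 2 := by
  have : Nontrivial (Fin n) := Fin.nontrivial_iff_two_le.mpr hn
  have : Nontrivial (Fin m) := Fin.nontrivial_iff_two_le.mpr hm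
  obtain ⟨a₀, a₁, ha⟩ := exists_pair_ne (Fin n)
  obtain ⟨b₀, b₁, hb⟩ := exists_pair_ne (Fin m)
  exact tollNumber_eq_two (by simp [ha]) (isTollSet_top_boxProd_top_pair ha hb)
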